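/- For a prime $p$ and integer $a$ with $p \nmid a$, the complete exponential sum $S_j(p,a) = \sum_{m=1}^{p} e(am^j/p)$ satisfies $|S_j(p,a)| \leq ((j,p-1)-1)\sqrt{p}$. -/

import Mathlib

/-!
Expanding an additive character `ψ` of a finite field `F` on `Fˣ` in multiplicative characters,
with Gauss sums as Fourier coefficients, gives `∑ x, ψ (x ^ j) = 1 + ∑_{χ ^ j = 1} g(χ, ψ)`.
The trivial character contributes `g(1, ψ) = -1`, cancelling the `1`; the character group is
cyclic of order `q - 1`, so `gcd(j, q - 1) - 1` characters remain, each with `|g(χ, ψ)| = √q`.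
-/

open Finset

theorem ZMod.sum_Icc_one_natCast {M : Type*} [AddCommMonoid M] (p : ℕ) [NeZero p]
    (f : ZMod p → M) :
    ∑ m ∈ Icc 1 p, f m = ∑ x, f x := by
  have hrange (g : ZMod p → M) : ∑ m ∈ range p, g m = ∑ x, g x :=
    sum_nbij' (fun m : ℕ => (m : ZMod p)) ZMod.val (by simp) (by simp [ZMod.val_lt])
      (fun m hm => ZMod.val_cast_of_lt (mem_range.mp hm)) (fun x _ => ZMod.natCast_zmod_val x)
      (fun _ _ => rfl)
  rw [← Finset.Ico_add_one_right_eq_Icc, sum_Ico_eq_sum_range, Nat.add_sub_cancel]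
  push_cast
  rw [hrange (fun x => f (1 + x))]
  exact Equiv.sum_comp (Equiv.addLeft 1) f

namespace MulChar

theorem sum_apply_eq_ite {M R : Type*} [CommMonoid M] [Fintype M] [DecidableEq M] [CommRing R]
    [IsDomain R] [DecidableEq R] (χ : MulChar M R) :
    ∑ x, χ x = if χ = 1 then (Fintype.card Mˣ : R) else 0 := by
  split_ifs with h
  · rw [h, sum_one_eq_card_units]
  · exact sum_eq_zero_of_ne_one h

variable {M R : Type*} [CommMonoid M] [Finite M] [CommRing R] [IsDomain R]

noncomputable instance fintype : Fintype (MulChar M R) := .ofFinite _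

variable [HasEnoughRootsOfUnity R (Monoid.exponent Mˣ)]

theorem sum_characters_eq_zero {a : M} (ha : a ≠ 1) : ∑ χ : MulChar M R, χ a = 0 := by
  obtain ⟨χ, hχ⟩ := exists_apply_ne_one_of_hasEnoughRootsOfUnity M R ha
  refine eq_zero_of_mul_eq_self_left hχ ?_
  simp only [mul_sum, ← mul_apply]
  exact Fintype.sum_bijective _ (Group.mulLeft_bijective χ) _ _ fun _ ↦ rfl

theorem sum_characters_eq [DecidableEq M] (a : M) :
    ∑ χ : MulChar M R, χ a = if a = 1 then (Nat.card Mˣ : R) else 0 := by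
  split_ifs with ha
  · simp [ha, ← card_eq_card_units_of_hasEnoughRootsOfUnity M R]
  · exact sum_characters_eq_zero ha

end MulChar

section FiniteField

variable {F : Type*} [Field F] [Fintype F]

theorem norm_gaussSum_eq_sqrt_card {χ : MulChar F ℂ} (hχ : χ ≠ 1) {ψ : AddChar F ℂ}
    (hψ : ψ ≠ 1) : ‖gaussSum χ ψ‖ = Real.sqrt (Fintype.card F) := by
  have hsq := gaussSum_mul_gaussSum_eq_card hχ (AddChar.IsPrimitive.of_ne_one hψ)
  rw [← star_gaussSum_eq, RCLike.star_def, Complex.mul_conj] at hsq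
  rw [Complex.norm_def, Complex.ofReal_injective (hsq.trans (Complex.ofReal_natCast _).symm)]

theorem card_mulChar_pow_eq_one (j : ℕ) :
    #{χ : MulChar F ℂ | χ ^ j = 1} = j.gcd (Fintype.card F - 1) := by
  have : IsCyclic (MulChar F ℂ) :=
    isCyclic_of_surjective _ (MulChar.mulEquiv_units F ℂ).some.symm.surjective
  have hker := IsCyclic.card_powMonoidHom_ker (MulChar F ℂ) j
  rw [MulChar.card_eq_card_units_of_hasEnoughRootsOfUnity, Nat.card_units,
    Nat.card_eq_fintype_card (α := F), Nat.gcd_comm] at hker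
  rw [← hker, ← Nat.card_eq_finsetCard]
  exact Nat.card_congr (Equiv.subtypeEquivRight fun χ => by simp)

variable [DecidableEq F]

theorem sum_mulChar_inv_mul_gaussSum {x : F} (hx : x ≠ 0) (ψ : AddChar F ℂ) :
    ∑ χ : MulChar F ℂ, χ x⁻¹ * gaussSum χ ψ = (Fintype.card F - 1 : ℕ) * ψ x := by
  simp only [gaussSum, mul_sum, ← mul_assoc, ← map_mul]
  rw [sum_comm]
  simp only [← sum_mul, MulChar.sum_characters_eq, inv_mul_eq_one₀ hx, ite_mul, zero_mul,
    sum_ite_eq, mem_univ, if_true, Nat.card_eq_fintype_card, Fintype.card_units]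

theorem sum_addChar_pow_eq_one_add_sum_gaussSum (ψ : AddChar F ℂ) {j : ℕ} (hj : j ≠ 0) :
    ∑ x : F, ψ (x ^ j) = 1 + ∑ χ with χ ^ j = 1, gaussSum χ ψ := by
  set n : ℂ := ((Fintype.card F - 1 : ℕ) : ℂ)
  have hn : n ≠ 0 := by
    have := Fintype.one_lt_card (α := F)
    exact Nat.cast_ne_zero.mpr (by omega)
  have hterm (x : F) :
      ∑ χ : MulChar F ℂ, (χ ^ j) x⁻¹ * gaussSum χ ψ =
        n * ψ (x ^ j) - if x = 0 then n else 0 := by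
    split_ifs with hx
    · simp [hx, zero_pow hj, MulChar.map_zero]
    · simp only [MulChar.pow_apply' _ hj, ← map_pow, inv_pow, sub_zero]
      exact sum_mulChar_inv_mul_gaussSum (pow_ne_zero j hx) ψ
  have hchar (χ : MulChar F ℂ) : ∑ x : F, (χ ^ j) x⁻¹ = if χ ^ j = 1 then n else 0 := by
    simp only [← MulChar.inv_apply', MulChar.sum_apply_eq_ite, inv_eq_one, Fintype.card_units, n]
  have key : n * ∑ x : F, ψ (x ^ j) - n = n * ∑ χ with χ ^ j = 1, gaussSum χ ψ :=
    calc n * ∑ x : F, ψ (x ^ j) - n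
        = ∑ x : F, (n * ψ (x ^ j) - if x = 0 then n else 0) := by
          rw [sum_sub_distrib, mul_sum]; simp
      _ = ∑ x : F, ∑ χ : MulChar F ℂ, (χ ^ j) x⁻¹ * gaussSum χ ψ :=
          (sum_congr rfl fun x _ => hterm x).symm
      _ = ∑ χ : MulChar F ℂ, (∑ x : F, (χ ^ j) x⁻¹) * gaussSum χ ψ := by
          rw [sum_comm]; simp only [sum_mul]
      _ = n * ∑ χ with χ ^ j = 1, gaussSum χ ψ := by
          simp only [hchar, ite_mul, zero_mul, ← sum_filter, mul_sum]
  rw [← mul_sub_one, mul_right_inj' hn] at key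
  linear_combination key

theorem norm_sum_addChar_pow_le {ψ : AddChar F ℂ} (hψ : ψ ≠ 1) {j : ℕ} (hj : j ≠ 0) :
    ‖∑ x : F, ψ (x ^ j)‖ ≤
      ((j.gcd (Fintype.card F - 1) : ℝ) - 1) * Real.sqrt (Fintype.card F) := by
  have h1 : (1 : MulChar F ℂ) ∈ ({χ | χ ^ j = 1} : Finset _) := by simp
  rw [sum_addChar_pow_eq_one_add_sum_gaussSum ψ hj, ← add_sum_erase _ _ h1,
    gaussSum_one_left hψ, add_neg_cancel_left]
  calc ‖∑ χ ∈ ({χ | χ ^ j = 1} : Finset _).erase 1, gaussSum χ ψ‖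
      ≤ ∑ χ ∈ ({χ | χ ^ j = 1} : Finset _).erase 1, ‖gaussSum χ ψ‖ := norm_sum_le _ _
    _ = _ := by
      rw [sum_congr rfl fun χ hχ => norm_gaussSum_eq_sqrt_card (ne_of_mem_erase hχ) hψ,
        sum_const, card_erase_of_mem h1, card_mulChar_pow_eq_one, nsmul_eq_mul,
        Nat.cast_sub (Nat.gcd_pos_of_pos_left _ (Nat.pos_of_ne_zero hj)), Nat.cast_one]

end FiniteField

theorem sum_Icc_exp_eq_sum_stdAddChar (p : ℕ) [NeZero p] (j : ℕ) (a : ℤ) :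
    ∑ m ∈ Icc 1 p, Complex.exp (2 * Real.pi * Complex.I * (a * m ^ j / p)) =
      ∑ x : ZMod p, ZMod.stdAddChar.mulShift (a : ZMod p) (x ^ j) := by
  rw [← ZMod.sum_Icc_one_natCast p]
  refine sum_congr rfl fun m _ => ?_
  have hcast : (a : ZMod p) * (m : ZMod p) ^ j = ((a * m ^ j : ℤ) : ZMod p) := by simp
  rw [AddChar.mulShift_apply, hcast, ZMod.stdAddChar_coe]
  simp [mul_div_assoc]

theorem stmt_8 (p : ℕ) (hp : p.Prime) (j : ℕ) (hj : 1 ≤ j) (a : ℤ) (ha : ¬ (p : ℤ) ∣ a) :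
    ‖∑ m ∈ Finset.Icc 1 p,
        Complex.exp (2 * Real.pi * Complex.I * (a * m ^ j / p))‖
      ≤ ((Nat.gcd j (p - 1) : ℝ) - 1) * Real.sqrt p := by
  have : Fact p.Prime := ⟨hp⟩
  have ha' : (a : ZMod p) ≠ 0 := by rwa [Ne, ZMod.intCast_zmod_eq_zero_iff_dvd]
  rw [sum_Icc_exp_eq_sum_stdAddChar]
  simpa [ZMod.card] using
    norm_sum_addChar_pow_le (ZMod.isPrimitive_stdAddChar p ha') (Nat.one_le_iff_ne_zero.mp hj)
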